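/- arXiv:1602.06464 — 2 statements merged into one kernel-verified Lean document; each statement's English description precedes it below -/
import Mathlib

section
/- Let a : ℕ → ℂ be completely multiplicative and λ : ℕ → ℝ be completely additive, and let s ∈ ℂ be such that the series ∑_{n≥1} |a(n)|·exp(−λ(n)·Re(s)) converges. Then the value of the general Dirichlet series at s is nonzero: ∑_{n=1}^∞ a(n)·exp(−λ(n)·s) ≠ 0. -/
/-!
Extended by `0` at `n = 0`, the terms `n ↦ a n * exp (-l n * s)` form a completely multiplicative
function `f : ℕ →*₀ ℂ`, and absolute convergence of the series at `s` is exactly summability of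
`‖f‖`. The Euler product then writes `∑ f n` as `exp (∑_p -log (1 - f p))`, which is never zero.
-/

open Complex

def Nat.extendByZeroHom {M₀ : Type*} [MonoidWithZero M₀] (g : ℕ → M₀) (h1 : g 1 = 1)
    (hmul : ∀ m n : ℕ, 1 ≤ m → 1 ≤ n → g (m * n) = g m * g n) : ℕ →*₀ M₀ where
  toFun n := if n = 0 then 0 else g n
  map_zero' := if_pos rfl
  map_one' := by simp [h1]
  map_mul' m n := by
    rcases Nat.eq_zero_or_pos m with rfl | hm
    · simp
    rcases Nat.eq_zero_or_pos n with rfl | hn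
    · simp
    simp [hm.ne', hn.ne', hmul m n hm hn]

@[simp]
lemma Nat.extendByZeroHom_succ {M₀ : Type*} [MonoidWithZero M₀] (g : ℕ → M₀) (h1 : g 1 = 1)
    (hmul : ∀ m n : ℕ, 1 ≤ m → 1 ≤ n → g (m * n) = g m * g n) (n : ℕ) :
    Nat.extendByZeroHom g h1 hmul (n + 1) = g (n + 1) :=
  if_neg (t := 0) n.succ_ne_zero

lemma Nat.tsum_extendByZeroHom {R : Type*} [Semiring R] [TopologicalSpace R] (g : ℕ → R)
    (h1 : g 1 = 1) (hmul : ∀ m n : ℕ, 1 ≤ m → 1 ≤ n → g (m * n) = g m * g n) :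
    ∑' n, Nat.extendByZeroHom g h1 hmul n = ∑' n, g (n + 1) := by
  rw [← (add_left_injective 1).tsum_eq (f := Nat.extendByZeroHom g h1 hmul)]
  · simp only [Nat.extendByZeroHom_succ]
  · intro n hn
    obtain ⟨k, rfl⟩ := Nat.exists_eq_succ_of_ne_zero (n := n) (by rintro rfl; exact hn (map_zero _))
    exact ⟨k, rfl⟩

theorem tsum_ne_zero_of_summable_norm {f : ℕ →*₀ ℂ} (hsum : Summable (‖f ·‖)) :
    ∑' n, f n ≠ 0 := by
  rw [← EulerProduct.exp_tsum_primes_log_eq_tsum hsum]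
  exact exp_ne_zero _

noncomputable def generalDirichletTerm (a : ℕ → ℂ) (l : ℕ → ℝ) (s : ℂ) (n : ℕ) : ℂ :=
  a n * exp (-(l n : ℂ) * s)

lemma generalDirichletTerm_one {a : ℕ → ℂ} {l : ℕ → ℝ} (ha1 : a 1 = 1) (hl1 : l 1 = 0) (s : ℂ) :
    generalDirichletTerm a l s 1 = 1 := by
  simp [generalDirichletTerm, ha1, hl1]

lemma generalDirichletTerm_mul {a : ℕ → ℂ} {l : ℕ → ℝ}
    (haMul : ∀ m n : ℕ, 1 ≤ m → 1 ≤ n → a (m * n) = a m * a n)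
    (hlAdd : ∀ m n : ℕ, 1 ≤ m → 1 ≤ n → l (m * n) = l m + l n) (s : ℂ) (m n : ℕ)
    (hm : 1 ≤ m) (hn : 1 ≤ n) :
    generalDirichletTerm a l s (m * n) =
      generalDirichletTerm a l s m * generalDirichletTerm a l s n := by
  simp only [generalDirichletTerm, haMul m n hm hn, hlAdd m n hm hn, ofReal_add, neg_add, add_mul,
    exp_add]
  ring

lemma norm_generalDirichletTerm (a : ℕ → ℂ) (l : ℕ → ℝ) (s : ℂ) (n : ℕ) :
    ‖generalDirichletTerm a l s n‖ = ‖a n‖ * Real.exp (-l n * s.re) := by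
  rw [generalDirichletTerm, norm_mul, norm_exp, ← ofReal_neg, re_ofReal_mul]

/-- At a point of absolute convergence, a general Dirichlet series with
completely multiplicative coefficients and completely additive exponents
does not vanish. -/
theorem general_dirichlet_series_ne_zero
    (a : ℕ → ℂ) (l : ℕ → ℝ)
    (ha1 : a 1 = 1)
    (haMul : ∀ m n : ℕ, 1 ≤ m → 1 ≤ n → a (m * n) = a m * a n)
    (hl1 : l 1 = 0)
    (hlAdd : ∀ m n : ℕ, 1 ≤ m → 1 ≤ n → l (m * n) = l m + l n)
    (s : ℂ)
    (hsum : Summable fun n : ℕ => ‖a (n + 1)‖ * Real.exp (-(l (n + 1)) * s.re)) :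
    (∑' n : ℕ, a (n + 1) * Complex.exp (-(l (n + 1) : ℂ) * s)) ≠ 0 := by
  let f := Nat.extendByZeroHom (generalDirichletTerm a l s) (generalDirichletTerm_one ha1 hl1 s)
    (generalDirichletTerm_mul haMul hlAdd s)
  have hsum_norm : Summable (‖f ·‖) := by
    refine (summable_nat_add_iff 1).mp ?_
    simpa only [f, Nat.extendByZeroHom_succ, norm_generalDirichletTerm] using hsum
  have hf_ne_zero := tsum_ne_zero_of_summable_norm hsum_norm
  rwa [Nat.tsum_extendByZeroHom] at hf_ne_zero
end

section
/- The non-trivial zeros of the Davenport–Heilbronn function f are symmetric with respect to the critical line Re(s) = 1/2: if s₀ ∈ ℂ satisfies 0 < Re(s₀) < 1 and f(s₀) = 0, then f(1 − conj(s₀)) = 0, where conj denotes complex conjugation. -/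
/-!
Write `a = (1 - iκ) / 2`; since `χbar = χ⁻¹`, `f = a L(χ, ·) + conj a L(χ⁻¹, ·)`. As
`L(χ⁻¹, s) = conj L(χ, conj s)`, `f (conj s) = conj (f s)`. The constant `κ` is exactly what
makes `a ε(χ) = conj a` for the root number `ε(χ) = τ(χ) / (i √5)`; conjugating gives
`conj a ε(χ⁻¹) = a`, so the functional equations of `L(χ, ·)` and `L(χ⁻¹, ·)` combine into
`Λ(1 - s) = 5 ^ (s - 1/2) Λ(s)` for `Λ = a Λ(χ, ·) + conj a Λ(χ⁻¹, ·)`, the completion of `f`.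
The gamma factor does not vanish for `0 < Re s`, so in the critical strip the zeros of `f` are
symmetric under `s ↦ 1 - s`, hence under `s ↦ 1 - conj s`.
-/

open Complex
open scoped ComplexConjugate Real

lemma LSeries_conj (f : ℕ → ℂ) (s : ℂ) :
    LSeries (fun n ↦ conj (f n)) s = conj (LSeries f (conj s)) := by
  rw [LSeries, LSeries, conj_tsum]
  congr 1 with n
  rcases eq_or_ne n 0 with rfl | hn
  · simp
  · have harg : (n : ℂ).arg ≠ Real.pi := by rw [natCast_arg]; exact Real.pi_ne_zero.symm
    rw [LSeries.term_of_ne_zero hn, LSeries.term_of_ne_zero hn, map_div₀,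
      cpow_conj _ _ harg, conj_conj, conj_natCast]

namespace DirichletCharacter

variable {N : ℕ}

lemma LFunction_inv_eq_conj [NeZero N] {χ : DirichletCharacter ℂ N} (hχ : χ ≠ 1) (s : ℂ) :
    LFunction χ⁻¹ s = conj (LFunction χ (conj s)) := by
  have hL := differentiable_LFunction hχ
  have hL_conj : Differentiable ℂ (conj ∘ LFunction χ ∘ conj) := fun z ↦
    differentiableAt_conj_conj_iff.2 (hL _)
  suffices LFunction χ⁻¹ = conj ∘ LFunction χ ∘ conj from congrFun this s
  refine AnalyticOnNhd.eq_of_eventuallyEq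
    (analyticOnNhd_univ_iff_differentiable.2 (differentiable_LFunction (inv_ne_one.2 hχ)))
    (analyticOnNhd_univ_iff_differentiable.2 hL_conj) (z₀ := 2) ?_
  filter_upwards [(continuous_re.isOpen_preimage _ isOpen_Ioi).mem_nhds
    (by norm_num : (2 : ℂ) ∈ re ⁻¹' Set.Ioi 1)] with z (hz : 1 < z.re)
  rw [Function.comp_apply, Function.comp_apply, LFunction_eq_LSeries _ hz,
    LFunction_eq_LSeries _ (by simpa using hz), ← LSeries_conj]
  simp_rw [← MulChar.star_apply', RCLike.star_def]

lemma inv_apply_neg_one (χ : DirichletCharacter ℂ N) : χ⁻¹ (-1) = χ (-1) := by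
  rw [MulChar.inv_apply_eq_inv']
  rcases χ.even_or_odd with h | h <;> rw [h] <;> norm_num

lemma gaussSum_inv_stdAddChar [NeZero N] (χ : DirichletCharacter ℂ N) :
    gaussSum χ⁻¹ ZMod.stdAddChar = χ (-1) * conj (gaussSum χ ZMod.stdAddChar) := by
  rw [← RCLike.star_def, star_gaussSum_eq, AddChar.inv_mulShift,
    ← gaussSum_mulShift χ⁻¹ _ (-1), Units.val_neg, Units.val_one, inv_apply_neg_one]

lemma Even.inv {χ : DirichletCharacter ℂ N} (hχ : χ.Even) : χ⁻¹.Even := by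
  rwa [Even, inv_apply_neg_one]

lemma Odd.inv {χ : DirichletCharacter ℂ N} (hχ : χ.Odd) : χ⁻¹.Odd := by
  rwa [Odd, inv_apply_neg_one]

lemma rootNumber_inv [NeZero N] (χ : DirichletCharacter ℂ N) :
    rootNumber χ⁻¹ = conj (rootNumber χ) := by
  have hN : conj ((N : ℂ) ^ (1 / 2 : ℂ)) = (N : ℂ) ^ (1 / 2 : ℂ) := by
    simpa [map_ofNat] using (cpow_conj (N : ℂ) (1 / 2) (by simp [Real.pi_ne_zero.symm])).symm
  rcases χ.even_or_odd with h | h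
  · simp only [rootNumber, if_pos h, if_pos h.inv, gaussSum_inv_stdAddChar, map_div₀, hN,
      show χ (-1) = 1 from h, one_mul, pow_zero, map_one]
  · simp only [rootNumber, if_neg h.not_even, if_neg h.inv.not_even, gaussSum_inv_stdAddChar,
      map_div₀, hN, show χ (-1) = -1 from h, pow_one, conj_I, div_neg, neg_div, neg_one_mul]

lemma gammaFactor_inv (χ : DirichletCharacter ℂ N) : gammaFactor χ⁻¹ = gammaFactor χ := by
  ext s
  rcases χ.even_or_odd with h | h
  · rw [h.gammaFactor_def, h.inv.gammaFactor_def]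
  · rw [h.gammaFactor_def, h.inv.gammaFactor_def]

lemma IsPrimitive.inv {χ : DirichletCharacter ℂ N} (hχ : χ.IsPrimitive) : χ⁻¹.IsPrimitive := by
  rwa [IsPrimitive, conductor_inv]

lemma isPrimitive_of_prime {R : Type*} [CommMonoidWithZero R] {p : ℕ} (hp : p.Prime)
    {χ : DirichletCharacter R p} (hχ : χ ≠ 1) : χ.IsPrimitive :=
  (hp.eq_one_or_self_of_dvd _ χ.conductor_dvd_level).resolve_left
    (haveI : NeZero p := ⟨hp.ne_zero⟩; mt eq_one_iff_conductor_eq_one.mpr hχ)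

lemma gammaFactor_ne_zero_of_re_pos (χ : DirichletCharacter ℂ N) {s : ℂ} (hs : 0 < s.re) :
    gammaFactor χ s ≠ 0 := by
  rcases χ.even_or_odd with h | h
  · rw [h.gammaFactor_def]; exact Gammaℝ_ne_zero_of_re_pos hs
  · rw [h.gammaFactor_def]; exact Gammaℝ_ne_zero_of_re_pos (by simp; linarith)

variable [NeZero N]

noncomputable def conjPairLFunction (χ : DirichletCharacter ℂ N) (a s : ℂ) : ℂ :=
  a * LFunction χ s + conj a * LFunction χ⁻¹ s

noncomputable def completedConjPairLFunction (χ : DirichletCharacter ℂ N) (a s : ℂ) : ℂ :=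
  a * completedLFunction χ s + conj a * completedLFunction χ⁻¹ s

lemma conjPairLFunction_conj {χ : DirichletCharacter ℂ N} (hχ : χ ≠ 1) (a s : ℂ) :
    conjPairLFunction χ a (conj s) = conj (conjPairLFunction χ a s) := by
  have h := LFunction_inv_eq_conj (inv_ne_one.2 hχ) (conj s)
  rw [inv_inv, conj_conj] at h
  rw [conjPairLFunction, conjPairLFunction, LFunction_inv_eq_conj hχ, conj_conj, h]
  simp only [map_add, map_mul, conj_conj]
  ring

lemma IsPrimitive.completedConjPairLFunction_one_sub {χ : DirichletCharacter ℂ N}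
    (hχ : χ.IsPrimitive) {a : ℂ} (ha : a * rootNumber χ = conj a) (s : ℂ) :
    completedConjPairLFunction χ a (1 - s) =
      N ^ (s - 1 / 2) * completedConjPairLFunction χ a s := by
  have ha' : conj a * rootNumber χ⁻¹ = a := by
    rw [rootNumber_inv, ← map_mul, ha, conj_conj]
  have h := hχ.inv.completedLFunction_one_sub s
  rw [inv_inv] at h
  rw [completedConjPairLFunction, completedConjPairLFunction, hχ.completedLFunction_one_sub, h]
  linear_combination (N : ℂ) ^ (s - 1 / 2) * (completedLFunction χ⁻¹ s * ha
    + completedLFunction χ s * ha')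

lemma conjPairLFunction_eq_completed_div (χ : DirichletCharacter ℂ N) (a : ℂ) {s : ℂ}
    (hs : s ≠ 0 ∨ N ≠ 1) :
    conjPairLFunction χ a s = completedConjPairLFunction χ a s / gammaFactor χ s := by
  rw [conjPairLFunction, completedConjPairLFunction, LFunction_eq_completed_div_gammaFactor _ _ hs,
    LFunction_eq_completed_div_gammaFactor _ _ hs, gammaFactor_inv]
  ring

lemma IsPrimitive.conjPairLFunction_one_sub_eq_zero {χ : DirichletCharacter ℂ N}
    (hχ : χ.IsPrimitive) {a : ℂ} (ha : a * rootNumber χ = conj a) {s : ℂ}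
    (hs₀ : 0 < s.re) (hs₁ : s.re < 1) (h : conjPairLFunction χ a s = 0) :
    conjPairLFunction χ a (1 - s) = 0 := by
  have hΛ : completedConjPairLFunction χ a s = 0 := by
    rwa [conjPairLFunction_eq_completed_div χ a (.inl fun h ↦ by simp [h] at hs₀),
      div_eq_zero_iff, or_iff_left (gammaFactor_ne_zero_of_re_pos χ hs₀)] at h
  rw [conjPairLFunction_eq_completed_div χ a (.inl (sub_ne_zero.2 fun h ↦ by simp [← h] at hs₁)),
    hχ.completedConjPairLFunction_one_sub ha, hΛ, mul_zero, zero_div]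

end DirichletCharacter

lemma Real.sin_pi_div_five : Real.sin (π / 5) = √(10 - 2 * √5) / 4 := by
  have h5 : √5 ^ 2 = 5 := Real.sq_sqrt (by norm_num)
  rw [Real.sin_eq_sqrt_one_sub_cos_sq (by positivity) (by linarith [Real.pi_pos]),
    Real.cos_pi_div_five, show 1 - ((1 + √5) / 4) ^ 2 = (10 - 2 * √5) / 4 ^ 2 by
      linear_combination (-1 / 16 : ℝ) * h5, Real.sqrt_div' _ (by norm_num : (0 : ℝ) ≤ 4 ^ 2),
    Real.sqrt_sq (by norm_num)]

namespace DirichletCharacter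

variable {χ : DirichletCharacter ℂ 5}

lemma odd_of_apply_two_eq_I (hχ : χ 2 = I) : χ.Odd := by
  rw [Odd, show (-1 : ZMod 5) = 2 * 2 from rfl, map_mul, hχ, I_mul_I]

lemma ne_one_of_apply_two_eq_I (hχ : χ 2 = I) : χ ≠ 1 := by
  rintro rfl
  simpa using congrArg im (hχ.symm.trans (MulChar.one_apply (by decide)))

lemma gaussSum_stdAddChar_of_apply_two_eq_I (hχ : χ 2 = I) :
    gaussSum χ ZMod.stdAddChar = 2 * I * Real.sin (2 * π / 5) - 2 * Real.sin (π / 5) := by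
  have h4 : χ 4 = -1 := by rw [show (4 : ZMod 5) = 2 * 2 from rfl, map_mul, hχ, I_mul_I]
  have h3 : χ 3 = -I := by rw [show (3 : ZMod 5) = 2 * 4 from rfl, map_mul, hχ, h4, mul_neg_one]
  have e4 : ZMod.stdAddChar (4 : ZMod 5) = conj (ZMod.stdAddChar (1 : ZMod 5)) := by
    rw [← AddChar.map_neg_eq_conj]; rfl
  have e3 : ZMod.stdAddChar (3 : ZMod 5) = conj (ZMod.stdAddChar (2 : ZMod 5)) := by
    rw [← AddChar.map_neg_eq_conj]; rfl
  have him (k : ℕ) : (ZMod.stdAddChar (k : ZMod 5)).im = Real.sin (2 * π * k / 5) := by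
    rw [← Int.cast_natCast, ZMod.stdAddChar_coe, ← exp_ofReal_mul_I_im]
    push_cast; ring_nf
  have him1 := him 1
  have him2 := him 2
  norm_num at him1 him2
  rw [show 2 * π * 2 / 5 = π - π / 5 by ring, Real.sin_pi_sub] at him2
  rw [gaussSum, show (Finset.univ : Finset (ZMod 5)) = {0, 1, 2, 3, 4} from rfl,
    Finset.sum_insert (by decide), Finset.sum_insert (by decide), Finset.sum_insert (by decide),
    Finset.sum_insert (by decide), Finset.sum_singleton, χ.map_nonunit (by decide), map_one, hχ, h3,
    h4, e3, e4]
  calc _ = (ZMod.stdAddChar (1 : ZMod 5) - conj (ZMod.stdAddChar (1 : ZMod 5)))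
        + I * (ZMod.stdAddChar (2 : ZMod 5) - conj (ZMod.stdAddChar (2 : ZMod 5))) := by ring
    _ = _ := by
      rw [sub_conj, sub_conj, him1, him2]
      simp only [ofReal_mul, ofReal_ofNat]
      linear_combination (2 * Real.sin (π / 5) : ℂ) * I_sq

lemma davenportHeilbronn_coeff_mul_rootNumber (hχ : χ 2 = I) {κ : ℝ}
    (hκ : κ = (√(10 - 2 * √5) - 2) / (√5 - 1)) :
    (1 - I * κ) / 2 * rootNumber χ = conj ((1 - I * κ) / 2) := by
  have hsqrt : ((5 : ℕ) : ℂ) ^ (1 / 2 : ℂ) = √5 := by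
    rw [Real.sqrt_eq_rpow, ofReal_cpow (by norm_num)]
    norm_num
  set q := √(10 - 2 * √5)
  set r := √5
  have hr : r ^ 2 = 5 := Real.sq_sqrt (by norm_num)
  have hq : q ^ 2 = 10 - 2 * r := Real.sq_sqrt (by nlinarith [Real.sqrt_nonneg 5])
  have hr0 : (r : ℂ) ≠ 0 := ofReal_ne_zero.2 (by positivity)
  have hκ' : κ = (q - 2) * (r + 1) / 4 := by
    rw [hκ, div_eq_div_iff (by nlinarith) (by norm_num)]
    linear_combination (2 - q) * hr
  have hsin : Real.sin (2 * π / 5) = q * (1 + r) / 8 := by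
    rw [show 2 * π / 5 = 2 * (π / 5) by ring, Real.sin_two_mul, Real.sin_pi_div_five,
      Real.cos_pi_div_five]
    ring
  rw [rootNumber, if_neg (odd_of_apply_two_eq_I hχ).not_even, pow_one,
    gaussSum_stdAddChar_of_apply_two_eq_I hχ, hsin, Real.sin_pi_div_five, hsqrt, div_div,
    ← mul_div_assoc, div_eq_iff (mul_ne_zero I_ne_zero hr0), hκ']
  simp only [map_div₀, map_sub, map_mul, conj_I, conj_ofReal, map_one, map_ofNat]
  have hq' : (q : ℂ) ^ 2 = 10 - 2 * r := by exact_mod_cast hq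
  have hr' : (r : ℂ) ^ 2 = 5 := by exact_mod_cast hr
  push_cast
  linear_combination (-q / 4 : ℂ) * I_sq + (I * (r + 1) - I ^ 2 * (r + 3)) / 16 * hq'
    + (-(I ^ 2 * (q ^ 2 + 2 * q - 12)) / 32 - I / 8) * hr'

end DirichletCharacter

open DirichletCharacter

/-- The non-trivial zeros of the Davenport–Heilbronn function are symmetric
with respect to the critical line `Re s = 1/2`. -/
theorem davenport_heilbronn_zeros_symmetric
    (χ χbar : DirichletCharacter ℂ 5)
    (hχ : χ 2 = I)
    (hbar : ∀ n : ZMod 5, χbar n = (starRingEnd ℂ) (χ n))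
    (κ : ℝ) (hκ : κ = (Real.sqrt (10 - 2 * Real.sqrt 5) - 2) / (Real.sqrt 5 - 1))
    (f : ℂ → ℂ)
    (hf : ∀ s : ℂ, f s = ((1 - I * κ) / 2) * DirichletCharacter.LFunction χ s
        + ((1 + I * κ) / 2) * DirichletCharacter.LFunction χbar s) :
    ∀ s₀ : ℂ, 0 < s₀.re → s₀.re < 1 → f s₀ = 0 →
      f (1 - (starRingEnd ℂ) s₀) = 0 := by
  intro s₀ hre0 hre1 hzero
  have hχbar : χbar = χ⁻¹ := MulChar.ext fun n ↦ by
    rw [hbar, ← MulChar.star_apply', RCLike.star_def]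
  have hfa : f = conjPairLFunction χ ((1 - I * κ) / 2) := funext fun s ↦ by
    simp only [hf, conjPairLFunction, hχbar, map_div₀, map_sub, map_one, map_mul, conj_I,
      conj_ofReal, map_ofNat, neg_mul, sub_neg_eq_add]
  have hχ1 := ne_one_of_apply_two_eq_I hχ
  have hconj : f (conj s₀) = 0 := by
    rw [hfa, conjPairLFunction_conj hχ1, ← hfa, hzero, map_zero]
  rw [hfa] at hconj ⊢
  exact (isPrimitive_of_prime Nat.prime_five hχ1).conjPairLFunction_one_sub_eq_zero
    (davenportHeilbronn_coeff_mul_rootNumber hχ hκ) (by simpa using hre0) (by simpa using hre1)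
    hconj
end
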